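/- arXiv:2201.11710 — 2 statements merged into one kernel-verified Lean document; each statement's English description precedes it below -/
import Mathlib

section
/- Fix $\epsilon'\in(0,1)$ and a strictly increasing $F:\mathbb{Z}^+\to[0,1)$ with $\lim_{n\to\infty}F(n)=1$. Let $n^* = \min\{n\in\mathbb{Z}^+ : 1-F(n)\le\epsilon'\}$. Then the minimum of $N(n_1^m)=n_1+\sum_{i=1}^{m-1}(n_{i+1}-n_i)(1-F(n_i))$ over all $m$ and all feasible strictly increasing integer sequences with $1-F(n_m)\le\epsilon'$ is attained by $m = n^*$ with $n_i = i$ for all $i\in[n^*]$. -/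
open Finset

/-- Objective `N(n_1^m)` for integer decoding times. -/
noncomputable def vlsfObjInt (F : ℕ → ℝ) (a : ℕ → ℕ) (m : ℕ) : ℝ :=
  (a 1 : ℝ) + ∑ i ∈ Finset.Ico 1 m, ((a (i + 1) : ℝ) - (a i : ℝ)) * (1 - F (a i))

/-- Feasibility: `n_1 < n_2 < ⋯ < n_m` are positive integers and `1 - F(n_m) ≤ ε'`. -/
def vlsfFeasible (F : ℕ → ℝ) (ε' : ℝ) (m : ℕ) (a : ℕ → ℕ) : Prop :=
  1 ≤ a 1 ∧ (∀ i, 1 ≤ i → i < m → a i < a (i + 1)) ∧ 1 - F (a m) ≤ ε'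

lemma vlsf_pos (a : ℕ → ℕ) (m : ℕ) (ha1 : 1 ≤ a 1)
    (hinc : ∀ i, 1 ≤ i → i < m → a i < a (i + 1)) :
    ∀ i, 1 ≤ i → i ≤ m → 1 ≤ a i := by
  intro i hi him
  induction i with
  | zero => omega
  | succ k ih =>
    rcases Nat.eq_or_lt_of_le hi with h | h
    · have hk : k = 0 := by omega
      subst hk; exact ha1
    · have hk : 1 ≤ k := by omega
      have := hinc k hk (by omega)
      have := ih hk (by omega)
      omega

lemma vlsf_lower (F : ℕ → ℝ)
    (hF_mono : StrictMono F)
    (hF_range : ∀ n, 1 ≤ n → F n ∈ Set.Ico (0 : ℝ) 1)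
    (a : ℕ → ℕ) (ha1 : 1 ≤ a 1) :
    ∀ m, 1 ≤ m → (∀ i, 1 ≤ i → i < m → a i < a (i + 1)) →
      1 + ∑ k ∈ Finset.Ico 1 (a m), (1 - F k) ≤ vlsfObjInt F a m := by
  intro m hm
  induction m, hm using Nat.le_induction with
  | base =>
    intro _
    have hsum : ∑ k ∈ Finset.Ico 1 (a 1), (1 - F k) ≤ (a 1 - 1 : ℕ) := by
      calc ∑ k ∈ Finset.Ico 1 (a 1), (1 - F k)
          ≤ ∑ k ∈ Finset.Ico 1 (a 1), (1 : ℝ) := by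
            apply Finset.sum_le_sum
            intro k hk
            simp only [Finset.mem_Ico] at hk
            have := (hF_range k hk.1).1
            linarith
        _ = (a 1 - 1 : ℕ) := by simp [Nat.card_Ico]
    have : ((a 1 - 1 : ℕ) : ℝ) = (a 1 : ℝ) - 1 := by
      push_cast [Nat.cast_sub ha1]; ring
    simp only [vlsfObjInt, Finset.Ico_self, Finset.sum_empty, add_zero]
    linarith [hsum, this.le, this.ge]
  | succ m hm ih =>
    intro hinc
    have hinc' : ∀ i, 1 ≤ i → i < m → a i < a (i + 1) := fun i h1 h2 =>
      hinc i h1 (by omega)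
    have ham : 1 ≤ a m := vlsf_pos a (m + 1) ha1 hinc m (by omega) (by omega)
    have hlt : a m < a (m + 1) := hinc m hm (by omega)
    have hobj : vlsfObjInt F a (m + 1) =
        vlsfObjInt F a m + ((a (m + 1) : ℝ) - (a m : ℝ)) * (1 - F (a m)) := by
      unfold vlsfObjInt
      rw [Finset.sum_Ico_succ_top hm]
      ring
    have hsplit : ∑ k ∈ Finset.Ico 1 (a (m + 1)), (1 - F k) =
        ∑ k ∈ Finset.Ico 1 (a m), (1 - F k) +
        ∑ k ∈ Finset.Ico (a m) (a (m + 1)), (1 - F k) := by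
      rw [Finset.sum_Ico_consecutive _ ham hlt.le]
    have hblock : ∑ k ∈ Finset.Ico (a m) (a (m + 1)), (1 - F k) ≤
        ((a (m + 1) : ℝ) - (a m : ℝ)) * (1 - F (a m)) := by
      have := Finset.sum_le_card_nsmul (Finset.Ico (a m) (a (m + 1)))
        (fun k => 1 - F k) (1 - F (a m)) (by
          intro k hk
          simp only [Finset.mem_Ico] at hk
          have := hF_mono.monotone hk.1
          linarith)
      rw [Nat.card_Ico, nsmul_eq_mul] at this
      have hc : ((a (m + 1) - a m : ℕ) : ℝ) = (a (m + 1) : ℝ) - (a m : ℝ) := by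
        push_cast [Nat.cast_sub hlt.le]; ring
      rw [hc] at this
      exact this
    have := ih hinc'
    rw [hobj, hsplit]
    linarith

/-- Corollary 1: decoding after every symbol, i.e., decoding times `1, 2, …, n*`
where `n*` is the least feasible final time, minimizes the objective over all `m`
and all feasible sequences. -/
theorem decode_every_symbol_optimal
    (F : ℕ → ℝ) (hF_mono : StrictMono F)
    (hF_range : ∀ n, 1 ≤ n → F n ∈ Set.Ico (0 : ℝ) 1)
    (hF_lim : Filter.Tendsto F Filter.atTop (nhds 1))
    (ε' : ℝ) (hε' : ε' ∈ Set.Ioo (0 : ℝ) 1)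
    (nstar : ℕ) (hnstar1 : 1 ≤ nstar) (hnstar_feas : 1 - F nstar ≤ ε')
    (hnstar_min : ∀ n, 1 ≤ n → 1 - F n ≤ ε' → nstar ≤ n) :
    vlsfFeasible F ε' nstar (fun i => i) ∧
      ∀ (m : ℕ) (a : ℕ → ℕ), 1 ≤ m → vlsfFeasible F ε' m a →
        vlsfObjInt F (fun i => i) nstar ≤ vlsfObjInt F a m := by
  constructor
  · exact ⟨le_refl 1, fun i _ _ => Nat.lt_succ_self i, hnstar_feas⟩
  · intro m a hm hfeas
    obtain ⟨ha1, hinc, hfinal⟩ := hfeas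
    have ham1 : 1 ≤ a m := vlsf_pos a m ha1 hinc m hm le_rfl
    have hamn : nstar ≤ a m := hnstar_min (a m) ham1 hfinal
    have hid : vlsfObjInt F (fun i => i) nstar =
        1 + ∑ k ∈ Finset.Ico 1 nstar, (1 - F k) := by
      unfold vlsfObjInt
      rw [Finset.sum_congr rfl (fun i _ => by push_cast; ring :
        ∀ i ∈ Finset.Ico 1 nstar,
          (((i + 1 : ℕ) : ℝ) - (i : ℝ)) * (1 - F i) = 1 - F i)]
      norm_num
    rw [hid]
    have hmono : ∑ k ∈ Finset.Ico 1 nstar, (1 - F k) ≤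
        ∑ k ∈ Finset.Ico 1 (a m), (1 - F k) := by
      apply Finset.sum_le_sum_of_subset_of_nonneg
      · exact Finset.Ico_subset_Ico le_rfl hamn
      · intro k hk _
        simp only [Finset.mem_Ico] at hk
        have := (hF_range k hk.1).2
        linarith
    have := vlsf_lower F hF_mono hF_range a ha1 m hm hinc
    linarith
end

section
/- Under the KKT conditions for the gap-constrained relaxed program, for each $k\in[m-1]$ exactly one of the following holds: (i) $\lambda_k > 0$ and $n_{k+1}^* = n_k^* + 1$ with $\lambda_k = \lambda_{k-1} + f(n_k^*) - F(n_k^*) + F(n_{k-1}^*)$; or (ii) $\lambda_k = 0$ and $n_{k+1}^* = n_k^* + \frac{F(n_k^*)-F(n_{k-1}^*)-\lambda_{k-1}}{f(n_k^*)} \ge n_k^* + 1$. Consequently the recursion $n_{k+1}^* = n_k^* + \max\{1, (F(n_k^*)-F(n_{k-1}^*)-\lambda_{k-1})/f(n_k^*)\}$ and $\lambda_k = \max\{\lambda_{k-1}+f(n_k^*)-F(n_k^*)+F(n_{k-1}^*),\ 0\}$ holds. -/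
/-- KKT dichotomy for the gap-constrained SDO: for each `k ∈ [m-1]`, either the
gap constraint is active (`λ_k > 0`, `n_{k+1}* = n_k* + 1`) or `λ_k = 0` and the
unconstrained step is taken; consequently the gap-constrained SDO recursions
(21)–(22) hold. -/
theorem kkt_gap_dichotomy_and_sdo_recursion
    (F f : ℝ → ℝ)
    (hF_mono : StrictMonoOn F (Set.Ioi 0))
    (hF0 : F 0 = 0)
    (hf_pos : ∀ x > (0 : ℝ), 0 < f x)
    (m : ℕ) (hm : 1 ≤ m)
    (n : ℕ → ℝ) (lam : ℕ → ℝ)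
    (hn0 : n 0 = 0) (hn1 : 0 < n 1) (hn_mono : ∀ i < m, n i < n (i + 1))
    (hlam0 : lam 0 = 0) (hlam_nonneg : ∀ k, 1 ≤ k → k ≤ m - 1 → 0 ≤ lam k)
    (h_gap : ∀ k, 1 ≤ k → k ≤ m - 1 → 1 ≤ n (k + 1) - n k)
    (h_stat : ∀ k, 1 ≤ k → k ≤ m - 1 →
      F (n k) - F (n (k - 1)) - (n (k + 1) - n k) * f (n k) + lam k - lam (k - 1) = 0)
    (h_cs : ∀ k, 1 ≤ k → k ≤ m - 1 → lam k * (n k - n (k + 1) + 1) = 0) :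
    ∀ k, 1 ≤ k → k ≤ m - 1 →
      ((0 < lam k ∧ n (k + 1) = n k + 1 ∧
          lam k = lam (k - 1) + f (n k) - F (n k) + F (n (k - 1))) ∨
        (lam k = 0 ∧
          n (k + 1) = n k + (F (n k) - F (n (k - 1)) - lam (k - 1)) / f (n k) ∧
          n k + 1 ≤ n (k + 1))) ∧
      n (k + 1) = n k + max 1 ((F (n k) - F (n (k - 1)) - lam (k - 1)) / f (n k)) ∧
      lam k = max (lam (k - 1) + f (n k) - F (n k) + F (n (k - 1))) 0 := by
  have hnpos : ∀ k, 1 ≤ k → k ≤ m → 0 < n k := by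
    intro k hk1 hkm
    induction k with
    | zero => omega
    | succ j ih =>
      rcases Nat.eq_zero_or_pos j with h0 | hj
      · subst h0; exact hn1
      · have hjm : j < m := by omega
        have := hn_mono j hjm
        have := ih hj (by omega)
        linarith
  intro k hk1 hkm
  have hkm' : k ≤ m := by omega
  have hnk : 0 < n k := hnpos k hk1 hkm'
  have hf : 0 < f (n k) := hf_pos (n k) hnk
  have hs := h_stat k hk1 hkm
  have hcs := h_cs k hk1 hkm
  have hg := h_gap k hk1 hkm
  have hlk := hlam_nonneg k hk1 hkm
  set A := F (n k) - F (n (k - 1)) with hA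
  set L := lam (k - 1) with hL
  rcases mul_eq_zero.mp hcs with hl0 | hg1
  · -- lam k = 0
    have hgf : (n (k + 1) - n k) * f (n k) = A - L := by
      rw [hl0] at hs; linarith
    have hgeq : n (k + 1) - n k = (A - L) / f (n k) :=
      eq_div_of_mul_eq (ne_of_gt hf) hgf
    have hge1 : 1 ≤ (A - L) / f (n k) := hgeq ▸ hg
    have hAL : f (n k) ≤ A - L := by
      have := (one_le_div hf).mp hge1
      linarith
    refine ⟨Or.inr ⟨hl0, by linarith [hgeq], by linarith⟩, ?_, ?_⟩
    · rw [max_eq_right hge1]; linarith [hgeq]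
    · rw [max_eq_right (by linarith : L + f (n k) - F (n k) + F (n (k - 1)) ≤ 0), hl0]
  · -- gap active: n (k+1) = n k + 1
    have hgap1 : n (k + 1) = n k + 1 := by linarith
    have hlam_eq : lam k = L + f (n k) - F (n k) + F (n (k - 1)) := by
      rw [hgap1] at hs; ring_nf at hs ⊢; linarith
    have hAle : A - L ≤ f (n k) := by
      have : lam k = L + f (n k) - A := by rw [hlam_eq]; ring
      linarith
    have hdiv : (A - L) / f (n k) ≤ 1 := (div_le_one hf).mpr hAle
    refine ⟨?_, ?_, ?_⟩
    · rcases eq_or_lt_of_le hlk with h0 | hpos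
      · refine Or.inr ⟨h0.symm, ?_, by linarith⟩
        have : A - L = f (n k) := by
          have : lam k = L + f (n k) - A := by rw [hlam_eq]; ring
          linarith
        rw [hgap1, this, div_self (ne_of_gt hf)]
      · exact Or.inl ⟨hpos, hgap1, hlam_eq⟩
    · rw [max_eq_left hdiv, hgap1]
    · rw [max_eq_left (by linarith : (0:ℝ) ≤ L + f (n k) - F (n k) + F (n (k - 1)))]
      exact hlam_eq
end
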